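/- arXiv:2410.09966 — 2 statements merged into one kernel-verified Lean document; each statement's English description precedes it below -/
import Mathlib

section
/- For every cube $Q \subseteq \mathbb{R}^n$ there exists $t \in \{0, 1/3\}^n$ and a cube $Q_t$ in the shifted dyadic grid $\mathcal{D}^t$ such that $Q \subseteq Q_t$ and $\ell(Q_t) \leq 6\,\ell(Q)$. -/
open Set

noncomputable section

/-- The axis-parallel half-open cube in `ℝⁿ` with lower corner `c` and side length `ℓ`. -/
def cube (n : ℕ) (c : Fin n → ℝ) (ℓ : ℝ) : Set (Fin n → ℝ) :=
  {x | ∀ i, c i ≤ x i ∧ x i < c i + ℓ}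

/-- The cube `2^k([0,1)^n + m + (-1)^k t)` of the shifted dyadic grid `𝒟^t`. -/
def shiftCube (n : ℕ) (t : Fin n → ℝ) (k : ℤ) (m : Fin n → ℤ) : Set (Fin n → ℝ) :=
  {x | ∀ i, (2 : ℝ) ^ k * (m i + (-1 : ℝ) ^ k * t i) ≤ x i ∧
        x i < (2 : ℝ) ^ k * (m i + (-1 : ℝ) ^ k * t i + 1)}

/-- One-dimensional version of the one-third trick. -/
lemma one_third_trick_dim1 (L c ℓ σ : ℝ) (hσ : σ = 1 ∨ σ = -1) (hL : 0 < L)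
    (hℓ : 0 < ℓ) (h3 : 3 * ℓ < L) :
    ∃ t : ℝ, (t = 0 ∨ t = 1 / 3) ∧ ∃ m : ℤ,
      L * (m + σ * t) ≤ c ∧ c + ℓ ≤ L * (m + σ * t + 1) := by
  have hq1 : (⌊c / L⌋ : ℝ) * L ≤ c := (le_div_iff₀ hL).mp (Int.floor_le _)
  have hq2 : c < ((⌊c / L⌋ : ℝ) + 1) * L := by
    have := Int.lt_floor_add_one (c / L)
    have := (div_lt_iff₀ hL).mp this
    push_cast at this ⊢
    linarith
  by_cases h : c + ℓ ≤ L * (⌊c / L⌋ + 1)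
  · refine ⟨0, Or.inl rfl, ⌊c / L⌋, ?_, ?_⟩ <;> nlinarith
  · push_neg at h
    rcases hσ with hσ | hσ
    · -- σ = 1, use m = ⌊c/L - 1/3⌋
      refine ⟨1 / 3, Or.inr rfl, ⌊c / L - 1 / 3⌋, ?_, ?_⟩
      · have h1 : (⌊c / L - 1 / 3⌋ : ℝ) ≤ c / L - 1 / 3 := Int.floor_le _
        have h2 : ((⌊c / L - 1 / 3⌋ : ℝ) + 1 / 3) * L ≤ c :=
          (le_div_iff₀ hL).mp (by linarith)
        subst hσ; nlinarith
      · have hm : (⌊c / L⌋ : ℝ) ≤ (⌊c / L - 1 / 3⌋ : ℝ) := by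
          have h0 : ((⌊c / L⌋ : ℝ) + 1 / 3) * L ≤ c := by nlinarith
          have h0' := (le_div_iff₀ hL).mpr h0
          have : (⌊c / L⌋ : ℝ) ≤ c / L - 1 / 3 := by linarith
          exact_mod_cast Int.le_floor.mpr (by exact_mod_cast this)
        subst hσ; nlinarith
    · -- σ = -1, use m = ⌊c/L + 1/3⌋
      refine ⟨1 / 3, Or.inr rfl, ⌊c / L + 1 / 3⌋, ?_, ?_⟩
      · have h1 : (⌊c / L + 1 / 3⌋ : ℝ) ≤ c / L + 1 / 3 := Int.floor_le _
        have h2 : ((⌊c / L + 1 / 3⌋ : ℝ) - 1 / 3) * L ≤ c :=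
          (le_div_iff₀ hL).mp (by linarith)
        subst hσ; nlinarith
      · have hm : (⌊c / L⌋ : ℝ) + 1 ≤ (⌊c / L + 1 / 3⌋ : ℝ) := by
          have h0 : ((⌊c / L⌋ : ℝ) + 2 / 3) * L ≤ c := by nlinarith
          have h0' := (le_div_iff₀ hL).mpr h0
          have : (⌊c / L⌋ : ℝ) + 1 ≤ c / L + 1 / 3 := by linarith
          have := Int.le_floor.mpr (by exact_mod_cast this : ((⌊c / L⌋ + 1 : ℤ) : ℝ) ≤ c / L + 1 / 3)
          exact_mod_cast this
        subst hσ; nlinarith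

/-- **The one-third trick.** Every cube `Q ⊆ ℝⁿ` is contained in a cube `Q_t` of one of
the shifted dyadic grids `𝒟^t`, `t ∈ {0,1/3}ⁿ`, with `ℓ(Q_t) ≤ 6 ℓ(Q)`. -/
theorem one_third_trick (n : ℕ) (c : Fin n → ℝ) (ℓ : ℝ) (hℓ : 0 < ℓ) :
    ∃ t : Fin n → ℝ, (∀ i, t i = 0 ∨ t i = 1 / 3) ∧
      ∃ (k : ℤ) (m : Fin n → ℤ),
        cube n c ℓ ⊆ shiftCube n t k m ∧ (2 : ℝ) ^ k ≤ 6 * ℓ := by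
  set k : ℤ := Int.log 2 (3 * ℓ) + 1 with hk
  have hL : (0 : ℝ) < 2 ^ k := by positivity
  have h3 : 3 * ℓ < (2 : ℝ) ^ k := by
    have := Int.lt_zpow_succ_log_self (by norm_num : 1 < 2) (3 * ℓ)
    simpa using this
  have h6 : (2 : ℝ) ^ k ≤ 6 * ℓ := by
    have h := Int.zpow_log_le_self (by norm_num : 1 < 2) (by linarith : (0:ℝ) < 3 * ℓ)
    have hpow : (2 : ℝ) ^ k = 2 * 2 ^ (Int.log 2 (3 * ℓ)) := by
      rw [hk, zpow_add_one₀ (by norm_num : (2:ℝ) ≠ 0)]; ring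
    push_cast at h
    rw [hpow]; linarith
  have hσ : (-1 : ℝ) ^ k = 1 ∨ (-1 : ℝ) ^ k = -1 := by
    rcases Int.even_or_odd k with h | h
    · exact Or.inl (Even.neg_one_zpow h)
    · exact Or.inr (Odd.neg_one_zpow h)
  have key := fun i => one_third_trick_dim1 ((2:ℝ) ^ k) (c i) ℓ ((-1:ℝ) ^ k) hσ hL hℓ h3
  choose t ht m hm1 hm2 using key
  refine ⟨t, ht, k, m, ?_, h6⟩
  intro x hx i
  obtain ⟨hx1, hx2⟩ := hx i
  exact ⟨le_trans (hm1 i) hx1, lt_of_lt_of_le hx2 (hm2 i)⟩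
end
end

section
/- Let $1 < p < 2 < q$ and set $\beta/2 = 1/p - 1/q - 1/2$ with $\beta \geq 0$. Suppose the commutator $C_b$ is bounded from $L^p(\mathbb{C})$ to $L^q(\mathbb{C})$ with norm $K$. Then for every square $Q \subseteq \mathbb{C}$, $\fint_Q |b(x) - b_Q|\,dx \leq C K |Q|^{\beta/2}$ for a dimensional constant $C$. -/
open MeasureTheory ENNReal

noncomputable section

/-- The commutator of the Cauchy transform. -/
def cauchyComm (b f : ℂ → ℂ) (z : ℂ) : ℂ :=
  ∫ w, (b z - b w) / (z - w) * f w

/-- The half-open axis-parallel square in `ℂ` with lower-left corner `c`, side `ℓ`. -/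
def square (c : ℂ) (ℓ : ℝ) : Set ℂ :=
  {z | (c.re ≤ z.re ∧ z.re < c.re + ℓ) ∧ (c.im ≤ z.im ∧ z.im < c.im + ℓ)}

/-- The average `b_Q = ⨍_Q b`. -/
def sqAvg (b : ℂ → ℂ) (Q : Set ℂ) : ℂ :=
  (volume Q).toReal⁻¹ • ∫ z in Q, b z

/-!
With the kernel `k(x, y) = (b x - b y) / (x - y)` and any point `c`, splitting
`x - y = (x - c) - (y - c)` in `b x - b y = k(x, y) (x - y)` and integrating over `y ∈ Q` gives
`|Q| (b x - b_Q) = (x - c) C_b(χ_Q)(x) - C_b((· - c) χ_Q)(x)`.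
If `Q ⊆ closedBall c r`, then `‖χ_Q‖_p = |Q|^{1/p}` and `‖(· - c) χ_Q‖_p ≤ r |Q|^{1/p}`, so
Hölder on `Q` and the `L^p → L^q` bound give `|Q| ∫_Q |b - b_Q| ≤ 2 r K |Q|^{1/p + 1 - 1/q}`.
For a square of side `ℓ`, `r = 2ℓ = 2|Q|^{1/2}`, and the exponents combine to `|Q|^{β/2}`.
-/

open Metric Set

lemma integrableOn_inv_ball (r : ℝ) : IntegrableOn (fun z : ℂ => z⁻¹) (ball 0 r) :=
  integrableOn_ball_of_norm_le_rpow (C := 1) (α := 1) (by simp) (by simp)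
    (ae_of_all _ fun z => by simp [Real.rpow_neg_one]) measurable_inv.aestronglyMeasurable

/-- `b y / (x - y)` is integrable on `Q` for a.e. `x ∈ Q` because the convolution of
`b χ_Q` with the integrable `z⁻¹ χ_{ball 0 (2r + 1)}` exists almost everywhere. -/
lemma ae_integrableOn_cauchyKernel {b : ℂ → ℂ} {Q : Set ℂ} {c : ℂ} {r : ℝ}
    (hQ : MeasurableSet Q) (hQc : Q ⊆ closedBall c r) (hbQ : IntegrableOn b Q) :
    ∀ᵐ x, x ∈ Q → IntegrableOn (fun y => (b x - b y) / (x - y)) Q := by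
  set g : ℂ → ℂ := (ball 0 (2 * r + 1)).indicator fun z => z⁻¹
  have hg : Integrable g :=
    (integrable_indicator_iff measurableSet_ball).2 (integrableOn_inv_ball _)
  have hg_eq : ∀ x ∈ Q, ∀ y ∈ Q, g (x - y) = (x - y)⁻¹ := by
    intro x hx y hy
    refine indicator_of_mem ?_ _
    have := dist_triangle_right x y c
    rw [mem_ball_zero_iff, ← dist_eq_norm]
    linarith [mem_closedBall.1 (hQc hx), mem_closedBall.1 (hQc hy)]
  filter_upwards [hbQ.ae_convolution_exists (ContinuousLinearMap.mul ℂ ℂ) hg] with x hconv hx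
  have hinv : IntegrableOn (fun y => (x - y)⁻¹) Q :=
    (hg.comp_sub_left x).integrableOn.congr_fun (hg_eq x hx) hQ
  have hb_inv : IntegrableOn (fun y => b y * (x - y)⁻¹) Q :=
    IntegrableOn.congr_fun (f := fun t => b t * g (x - t)) hconv
      (fun y hy => by simp only [hg_eq x hx y hy]) hQ
  refine IntegrableOn.congr_fun ((hinv.const_mul (b x)).sub hb_inv) (fun y _ => ?_) hQ
  simp only [Pi.sub_apply, div_eq_mul_inv, sub_mul]

lemma cauchyComm_indicator (b g : ℂ → ℂ) {Q : Set ℂ} (hQ : MeasurableSet Q) (x : ℂ) :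
    cauchyComm b (Q.indicator g) x = ∫ y in Q, (b x - b y) / (x - y) * g y := by
  rw [cauchyComm, ← integral_indicator hQ]
  simp only [indicator_mul_right]

lemma cauchyKernel_mul_sub (b : ℂ → ℂ) (x y : ℂ) :
    (b x - b y) / (x - y) * (x - y) = b x - b y := by
  rcases eq_or_ne x y with rfl | hxy
  · simp
  · exact div_mul_cancel₀ _ (sub_ne_zero.2 hxy)

lemma measureReal_smul_sub_setAverage {b : ℂ → ℂ} {Q : Set ℂ} (hQfin : volume Q ≠ ∞)
    (hbQ : IntegrableOn b Q) (x : ℂ) :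
    volume.real Q • (b x - ⨍ y in Q, b y) = ∫ y in Q, (b x - b y) := by
  have : IsFiniteMeasure (volume.restrict Q) := isFiniteMeasure_restrict.2 hQfin
  rw [integral_sub (integrable_const _) hbQ, setIntegral_const, smul_sub,
    measure_smul_setAverage _ hQfin]

lemma integral_sub_eq_cauchyComm {b : ℂ → ℂ} {Q : Set ℂ} (hQ : MeasurableSet Q)
    (hQfin : volume Q ≠ ∞) (hbQ : IntegrableOn b Q) {x : ℂ}
    (hk : IntegrableOn (fun y => (b x - b y) / (x - y)) Q) (c : ℂ) :
    ∫ y in Q, (b x - b y) = (x - c) * cauchyComm b (Q.indicator fun _ => 1) x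
      - cauchyComm b (Q.indicator fun y => y - c) x := by
  have : IsFiniteMeasure (volume.restrict Q) := isFiniteMeasure_restrict.2 hQfin
  have hsplit : ∀ y, (b x - b y) / (x - y) * (y - c)
      = (b x - b y) / (x - y) * (x - c) - (b x - b y) := by
    intro y
    linear_combination -cauchyKernel_mul_sub b x y
  rw [cauchyComm_indicator b _ hQ, cauchyComm_indicator b _ hQ]
  simp only [hsplit, mul_one]
  have hdiff : IntegrableOn (fun y => b x - b y) Q := (integrable_const _).sub hbQ
  rw [integral_sub (hk.mul_const _) hdiff, integral_mul_const]
  ring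

lemma eLpNorm_indicator_sub_le {μ : Measure ℂ} {Q : Set ℂ} {c : ℂ} {r : ℝ}
    (hQc : Q ⊆ closedBall c r) (hr : 0 ≤ r) (p : ℝ≥0∞) :
    eLpNorm (Q.indicator fun y => y - c) p μ ≤ ENNReal.ofReal r * μ Q ^ (1 / p.toReal) := by
  have hle : ∀ y, ‖Q.indicator (fun y => y - c) y‖ ≤ ‖Q.indicator (fun _ => r) y‖ := by
    intro y
    by_cases hy : y ∈ Q
    · simpa [hy, abs_of_nonneg hr, ← dist_eq_norm] using hQc hy
    · simp [hy]
  calc eLpNorm (Q.indicator fun y => y - c) p μ ≤ eLpNorm (Q.indicator fun _ => r) p μ :=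
        eLpNorm_mono hle
    _ ≤ ENNReal.ofReal r * μ Q ^ (1 / p.toReal) := by
        simpa [Real.enorm_eq_ofReal hr] using eLpNorm_indicator_const_le r p

lemma setLIntegral_enorm_le_eLpNorm_mul {α E : Type*} [MeasurableSpace α] {μ : Measure α}
    [NormedAddCommGroup E] {g : α → E} (hg : AEStronglyMeasurable g μ) (s : Set α)
    {q : ℝ≥0∞} (hq : 1 ≤ q) :
    ∫⁻ x in s, ‖g x‖ₑ ∂μ ≤ eLpNorm g q μ * μ s ^ (1 - 1 / q.toReal) := by
  have := eLpNorm_le_eLpNorm_mul_rpow_measure_univ (μ := μ.restrict s) hq hg.restrict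
  rw [eLpNorm_one_eq_lintegral_enorm, Measure.restrict_apply_univ, toReal_one, div_one] at this
  exact this.trans (mul_le_mul_left (eLpNorm_mono_measure _ Measure.restrict_le_self) _)

lemma aestronglyMeasurable_cauchyComm {b f : ℂ → ℂ} (hb : AEStronglyMeasurable b)
    (hf : AEStronglyMeasurable f) : AEStronglyMeasurable (cauchyComm b f) := by
  refine AEStronglyMeasurable.integral_prod_right' (μ := volume) (ν := volume)
    (f := fun z : ℂ × ℂ => (b z.1 - b z.2) / (z.1 - z.2) * f z.2) ?_
  simp_rw [div_eq_mul_inv]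
  exact ((hb.comp_fst.sub hb.comp_snd).mul
    (measurable_fst.sub measurable_snd).inv.aestronglyMeasurable).mul hf.comp_snd

lemma measureReal_mul_norm_sub_setAverage_le {b : ℂ → ℂ} {Q : Set ℂ} {c : ℂ} {r : ℝ}
    (hQ : MeasurableSet Q) (hQc : Q ⊆ closedBall c r) (hbQ : IntegrableOn b Q) {x : ℂ}
    (hx : x ∈ Q) (hk : IntegrableOn (fun y => (b x - b y) / (x - y)) Q) :
    volume.real Q * ‖b x - ⨍ y in Q, b y‖ ≤
      r * ‖cauchyComm b (Q.indicator fun _ => 1) x‖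
        + ‖cauchyComm b (Q.indicator fun y => y - c) x‖ := by
  have hQfin : volume Q ≠ ∞ := (isBounded_closedBall.subset hQc).measure_lt_top.ne
  rw [← Real.norm_of_nonneg measureReal_nonneg, ← norm_smul,
    measureReal_smul_sub_setAverage hQfin hbQ,
    integral_sub_eq_cauchyComm hQ hQfin hbQ hk c]
  refine (norm_sub_le _ _).trans ?_
  rw [norm_mul]
  gcongr
  exact mem_closedBall_iff_norm.1 (hQc hx)

section OscillationBound

variable {b : ℂ → ℂ} {Q : Set ℂ} {c : ℂ} {r K : ℝ} {p q : ℝ≥0∞}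

lemma ae_measure_mul_enorm_sub_setAverage_le (hQ : MeasurableSet Q)
    (hQc : Q ⊆ closedBall c r) (hr : 0 ≤ r) (hbQ : IntegrableOn b Q) :
    ∀ᵐ x ∂volume.restrict Q, volume Q * ‖b x - ⨍ y in Q, b y‖ₑ ≤
      ENNReal.ofReal r * ‖cauchyComm b (Q.indicator fun _ => 1) x‖ₑ
        + ‖cauchyComm b (Q.indicator fun y => y - c) x‖ₑ := by
  have hQfin : volume Q ≠ ∞ := (isBounded_closedBall.subset hQc).measure_lt_top.ne
  filter_upwards [ae_restrict_of_ae (ae_integrableOn_cauchyKernel hQ hQc hbQ),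
    ae_restrict_mem hQ] with x hk hx
  rw [← ofReal_measureReal hQfin, ← ofReal_norm, ← ofReal_mul measureReal_nonneg,
    ← ofReal_norm, ← ofReal_norm, ← ofReal_mul hr, ← ofReal_add (by positivity) (norm_nonneg _)]
  exact ofReal_le_ofReal (measureReal_mul_norm_sub_setAverage_le hQ hQc hbQ hx (hk hx))

lemma setLIntegral_enorm_cauchyComm_le (hb : AEStronglyMeasurable b) {f : ℂ → ℂ}
    (hf : AEStronglyMeasurable f) (hq : 1 ≤ q)
    (hbound : eLpNorm (cauchyComm b f) q volume ≤ ENNReal.ofReal K * eLpNorm f p volume) :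
    ∫⁻ x in Q, ‖cauchyComm b f x‖ₑ ≤
      ENNReal.ofReal K * eLpNorm f p volume * volume Q ^ (1 - 1 / q.toReal) :=
  (setLIntegral_enorm_le_eLpNorm_mul (aestronglyMeasurable_cauchyComm hb hf) Q hq).trans
    (mul_le_mul_left hbound _)

lemma measure_mul_setLIntegral_enorm_sub_setAverage_le (hQ : MeasurableSet Q)
    (hQc : Q ⊆ closedBall c r) (hr : 0 ≤ r) (hb : LocallyIntegrable b volume) (hq : 1 ≤ q)
    (hbound : ∀ f : ℂ → ℂ, eLpNorm (cauchyComm b f) q volume ≤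
      ENNReal.ofReal K * eLpNorm f p volume) :
    volume Q * ∫⁻ x in Q, ‖b x - ⨍ y in Q, b y‖ₑ ≤
      2 * ENNReal.ofReal r * ENNReal.ofReal K *
        (volume Q ^ (1 / p.toReal) * volume Q ^ (1 - 1 / q.toReal)) := by
  have hQfin : volume Q ≠ ∞ := (isBounded_closedBall.subset hQc).measure_lt_top.ne
  have hbQ : IntegrableOn b Q :=
    (hb.integrableOn_isCompact (isCompact_closedBall c r)).mono_set hQc
  set f₁ : ℂ → ℂ := Q.indicator fun _ => 1
  set f₂ : ℂ → ℂ := Q.indicator fun y => y - c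
  have hf₁ : AEStronglyMeasurable f₁ := aestronglyMeasurable_const.indicator hQ
  have hf₂ : AEStronglyMeasurable f₂ :=
    (measurable_id.sub_const c).aestronglyMeasurable.indicator hQ
  have hnorm₁ : eLpNorm f₁ p volume ≤ volume Q ^ (1 / p.toReal) := by
    simpa using eLpNorm_indicator_const_le (μ := volume) (s := Q) (1 : ℂ) p
  have hnorm₂ := eLpNorm_indicator_sub_le (μ := volume) hQc hr p
  have hC₁ :=
    setLIntegral_enorm_cauchyComm_le (Q := Q) hb.aestronglyMeasurable hf₁ hq (hbound f₁)
  have hC₂ :=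
    setLIntegral_enorm_cauchyComm_le (Q := Q) hb.aestronglyMeasurable hf₂ hq (hbound f₂)
  calc volume Q * ∫⁻ x in Q, ‖b x - ⨍ y in Q, b y‖ₑ
      = ∫⁻ x in Q, volume Q * ‖b x - ⨍ y in Q, b y‖ₑ :=
        (lintegral_const_mul' _ _ hQfin).symm
    _ ≤ ∫⁻ x in Q, (ENNReal.ofReal r * ‖cauchyComm b f₁ x‖ₑ + ‖cauchyComm b f₂ x‖ₑ) :=
        lintegral_mono_ae (ae_measure_mul_enorm_sub_setAverage_le hQ hQc hr hbQ)
    _ = ENNReal.ofReal r * (∫⁻ x in Q, ‖cauchyComm b f₁ x‖ₑ)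
          + ∫⁻ x in Q, ‖cauchyComm b f₂ x‖ₑ := by
        rw [lintegral_add_left' ((aestronglyMeasurable_cauchyComm hb.aestronglyMeasurable
          hf₁).restrict.enorm.const_mul _), lintegral_const_mul' _ _ ofReal_ne_top]
    _ ≤ ENNReal.ofReal r * (ENNReal.ofReal K * volume Q ^ (1 / p.toReal)
            * volume Q ^ (1 - 1 / q.toReal))
          + ENNReal.ofReal K * (ENNReal.ofReal r * volume Q ^ (1 / p.toReal))
            * volume Q ^ (1 - 1 / q.toReal) := by
        gcongr
        · exact hC₁.trans (by gcongr)
        · exact hC₂.trans (by gcongr)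
    _ = _ := by ring

theorem setAverage_norm_sub_setAverage_le (hQ : MeasurableSet Q) (hQc : Q ⊆ closedBall c r)
    (hQ0 : volume Q ≠ 0) (hr : 0 ≤ r) (hK : 0 ≤ K) (hb : LocallyIntegrable b volume)
    (hq : 1 ≤ q) (hbound : ∀ f : ℂ → ℂ, eLpNorm (cauchyComm b f) q volume ≤
      ENNReal.ofReal K * eLpNorm f p volume) :
    ⨍ x in Q, ‖b x - ⨍ y in Q, b y‖ ≤
      2 * r * K * volume.real Q ^ (1 / p.toReal - 1 / q.toReal - 1) := by
  have hQfin : volume Q ≠ ∞ := (isBounded_closedBall.subset hQc).measure_lt_top.ne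
  set s := 1 / p.toReal - 1 / q.toReal - 1
  set X := 2 * ENNReal.ofReal r * ENNReal.ofReal K * volume Q ^ s
  have hpow : volume Q ^ (1 / p.toReal) * volume Q ^ (1 - 1 / q.toReal)
      = volume Q * (volume Q * volume Q ^ s) := by
    rw [← rpow_add _ _ hQ0 hQfin, show 1 / p.toReal + (1 - 1 / q.toReal) = 1 + (1 + s) by ring,
      rpow_add _ _ hQ0 hQfin, rpow_add _ _ hQ0 hQfin, rpow_one]
  have hI : ∫⁻ x in Q, ‖b x - ⨍ y in Q, b y‖ₑ ≤ volume Q * X := by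
    refine (ENNReal.mul_le_mul_iff_right hQ0 hQfin).1 ?_
    refine (measure_mul_setLIntegral_enorm_sub_setAverage_le hQ hQc hr hb hq hbound).trans ?_
    rw [hpow]
    exact le_of_eq (by ring)
  have hmeas : AEStronglyMeasurable (fun x => b x - ⨍ y in Q, b y) (volume.restrict Q) :=
    hb.aestronglyMeasurable.restrict.sub aestronglyMeasurable_const
  have hV : 0 < volume.real Q := toReal_pos hQ0 hQfin
  rw [setAverage_eq, smul_eq_mul, integral_norm_eq_lintegral_enorm hmeas, inv_mul_le_iff₀ hV]
  have hX : X ≠ ∞ := by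
    have := rpow_ne_top_of_ne_zero hQ0 hQfin (y := s)
    finiteness
  calc (∫⁻ x in Q, ‖b x - ⨍ y in Q, b y‖ₑ).toReal ≤ (volume Q * X).toReal :=
        toReal_mono (mul_ne_top hQfin hX) hI
    _ = volume.real Q * (2 * r * K * volume.real Q ^ s) := by
        simp only [X, toReal_mul, toReal_ofReal hr, toReal_ofReal hK, toReal_rpow, toReal_ofNat,
          measureReal_def]

end OscillationBound

lemma square_eq_preimage_equivRealProd (c : ℂ) (ℓ : ℝ) :
    square c ℓ = Complex.measurableEquivRealProd ⁻¹'
      (Ico c.re (c.re + ℓ) ×ˢ Ico c.im (c.im + ℓ)) := by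
  ext z
  simp [square, Complex.measurableEquivRealProd]

lemma measurableSet_square (c : ℂ) (ℓ : ℝ) : MeasurableSet (square c ℓ) := by
  rw [square_eq_preimage_equivRealProd]
  exact (measurableSet_Ico.prod measurableSet_Ico).preimage
    Complex.measurableEquivRealProd.measurable

lemma volume_square (c : ℂ) (ℓ : ℝ) : volume (square c ℓ) = ENNReal.ofReal ℓ ^ 2 := by
  rw [square_eq_preimage_equivRealProd, Complex.volume_preserving_equiv_real_prod.measure_preimage
      (measurableSet_Ico.prod measurableSet_Ico).nullMeasurableSet,
    Measure.volume_eq_prod, Measure.prod_prod, Real.volume_Ico, Real.volume_Ico]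
  ring_nf

lemma square_subset_closedBall (c : ℂ) {ℓ : ℝ} : square c ℓ ⊆ closedBall c (2 * ℓ) := by
  rintro z ⟨⟨hre₁, hre₂⟩, him₁, him₂⟩
  rw [mem_closedBall_iff_norm]
  refine (Complex.norm_le_abs_re_add_abs_im _).trans ?_
  rw [Complex.sub_re, Complex.sub_im, abs_of_nonneg (by linarith), abs_of_nonneg (by linarith)]
  linarith

theorem oscillation_bound_of_bounded_comm_general (p q β K : ℝ)
    (hp : 1 < p) (hq : 2 < q)
    (hβ : β / 2 = 1 / p - 1 / q - 1 / 2) (hK : 0 ≤ K)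
    (b : ℂ → ℂ) (hb : LocallyIntegrable b volume)
    (hbound : ∀ f : ℂ → ℂ,
      eLpNorm (cauchyComm b f) (ENNReal.ofReal q) volume ≤
        ENNReal.ofReal K * eLpNorm f (ENNReal.ofReal p) volume) :
    ∃ C : ℝ, 0 < C ∧ ∀ (c : ℂ) (ℓ : ℝ), 0 < ℓ →
      (volume (square c ℓ)).toReal⁻¹ * ∫ z in square c ℓ, ‖b z - sqAvg b (square c ℓ)‖ ≤
        C * K * (volume (square c ℓ)).toReal ^ (β / 2) := by
  refine ⟨4, by norm_num, fun c ℓ hℓ => ?_⟩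
  have hvol : volume.real (square c ℓ) = ℓ ^ 2 := by
    rw [measureReal_def, volume_square, toReal_pow, toReal_ofReal hℓ.le]
  have hosc := setAverage_norm_sub_setAverage_le (measurableSet_square c ℓ)
    (square_subset_closedBall c) (by simp [volume_square, hℓ]) (by positivity) hK hb
    (one_le_ofReal.2 (by linarith)) hbound
  rw [setAverage_eq, smul_eq_mul, hvol, toReal_ofReal (by linarith),
    toReal_ofReal (by linarith)] at hosc
  have hexp : (ℓ ^ 2) ^ (β / 2) = ℓ * (ℓ ^ 2) ^ (1 / p - 1 / q - 1) := by
    rw [hβ, show 1 / p - 1 / q - 1 / 2 = 1 / 2 + (1 / p - 1 / q - 1) by ring,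
      Real.rpow_add (by positivity), ← Real.sqrt_eq_rpow, Real.sqrt_sq hℓ.le]
  rw [sqAvg, ← measureReal_def, ← setAverage_eq, hvol, hexp]
  exact hosc.trans_eq (by ring)

/-- **Necessity, `β ≥ 0` case.** If `1 < p < 2 < q`, `β/2 = 1/p - 1/q - 1/2`, `β ≥ 0`,
and `C_b : L^p(ℂ) → L^q(ℂ)` with norm at most `K`, then
`⨍_Q |b - b_Q| ≤ C K |Q|^{β/2}` for every square `Q`. -/
theorem oscillation_bound_of_bounded_comm (p q β K : ℝ)
    (hp : 1 < p) (hp2 : p < 2) (hq : 2 < q)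
    (hβ : β / 2 = 1 / p - 1 / q - 1 / 2) (hβ0 : 0 ≤ β) (hK : 0 ≤ K)
    (b : ℂ → ℂ) (hb : LocallyIntegrable b volume)
    (hbound : ∀ f : ℂ → ℂ,
      eLpNorm (cauchyComm b f) (ENNReal.ofReal q) volume ≤
        ENNReal.ofReal K * eLpNorm f (ENNReal.ofReal p) volume) :
    ∃ C : ℝ, 0 < C ∧ ∀ (c : ℂ) (ℓ : ℝ), 0 < ℓ →
      (volume (square c ℓ)).toReal⁻¹ * ∫ z in square c ℓ, ‖b z - sqAvg b (square c ℓ)‖ ≤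
        C * K * (volume (square c ℓ)).toReal ^ (β / 2) :=
  oscillation_bound_of_bounded_comm_general p q β K hp hq hβ hK b hb hbound
end
end
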